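/- Fix n > 0, K ≥ 0, and α > 1 constants. Define c(t) = (n α²/2) · max(1/t, K/(α−1)) for t > 0. Then for all t > 0 the two Case-1 conditions hold, namely (1−α)c(t) ≤ (nα/4)(0 − 2Kα), which is equivalent to c(t) ≥ nα²K/(2(α−1)), and (α/c)'(t) ≤ 2/(nα) wherever c is differentiable. -/
import Mathlib


theorem stmt_3 (n K α : ℝ) (hn : 0 < n) (hK : 0 ≤ K) (hα : 1 < α)
    (c : ℝ → ℝ)
    (hc : ∀ t : ℝ, 0 < t → c t = (n * α ^ 2 / 2) * max (1 / t) (K / (α - 1))) :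
    ∀ t : ℝ, 0 < t →
      ((1 - α) * c t ≤ (n * α * (0 - 2 * K * α)) / 4) ∧
      (∀ d : ℝ, HasDerivAt (fun s => α / c s) d t → d ≤ 2 / (n * α)) := by
  intro t ht
  have hα0 : (0:ℝ) < α := by linarith
  have hα1 : (0:ℝ) < α - 1 := by linarith
  have hq : (0:ℝ) ≤ K / (α - 1) := div_nonneg hK hα1.le
  have hcoef : (0:ℝ) < n * α ^ 2 / 2 := by positivity
  constructor
  · have h1 : K / (α - 1) ≤ max (1/t) (K/(α-1)) := le_max_right _ _
    have h2 : (n * α ^ 2 / 2) * (K / (α-1)) ≤ c t := by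
      rw [hc t ht]; exact mul_le_mul_of_nonneg_left h1 hcoef.le
    have key : (1 - α) * c t ≤ (1 - α) * ((n * α ^ 2 / 2) * (K / (α-1))) :=
      mul_le_mul_of_nonpos_left h2 (by linarith)
    have heq : (1 - α) * ((n * α ^ 2 / 2) * (K / (α-1))) = (n * α * (0 - 2*K*α))/4 := by
      field_simp
      ring
    linarith [heq ▸ key]
  · intro d hd
    set q := K / (α - 1) with hqdef
    set L := 2 / (n * α) with hLdef
    have hL0 : (0:ℝ) < L := by positivity
    -- rewrite f on positive reals
    have hf : ∀ s : ℝ, 0 < s → α / c s = L / max (1/s) q := by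
      intro s hs
      have hA : (0:ℝ) < max (1/s) q := lt_of_lt_of_le (by positivity) (le_max_left _ _)
      rw [hc s hs, hLdef]
      field_simp
    -- key slope bound
    have hkey : ∀ s : ℝ, t < s → α / c s - α / c t ≤ L * (s - t) := by
      intro s hts
      have hs : 0 < s := lt_trans ht hts
      set A := max (1/s) q with hAdef
      set B := max (1/t) q with hBdef
      have hA1 : 1/s ≤ A := le_max_left _ _
      have hB1 : 1/t ≤ B := le_max_left _ _
      have hA : (0:ℝ) < A := lt_of_lt_of_le (by positivity) hA1
      have hB : (0:ℝ) < B := lt_of_lt_of_le (by positivity) hB1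
      have hAB : A ≤ B := max_le_max (one_div_le_one_div_of_le ht hts.le) le_rfl
      have hδ : (0:ℝ) ≤ 1/t - 1/s := by
        have := one_div_le_one_div_of_le ht hts.le
        linarith
      have hBA : B ≤ A + (1/t - 1/s) := by
        apply max_le
        · have : 1/s ≤ A := hA1
          linarith
        · have : q ≤ A := le_max_right _ _
          linarith
      have hst : (0:ℝ) < s * t := by positivity
      have hAB' : 1/(s*t) ≤ A * B := by
        have : 1/(s*t) = (1/s) * (1/t) := by field_simp
        rw [this]
        exact mul_le_mul hA1 hB1 (by positivity) hA.le
      have hdiff : 1/A - 1/B ≤ s - t := by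
        have h1 : 1/A - 1/B = (B - A)/(A*B) := by rw [div_sub_div _ _ hA.ne' hB.ne', one_mul, mul_one]
        have h2 : B - A ≤ (s - t)/(s*t) := by
          have heq : 1/t - 1/s = (s-t)/(s*t) := by
            rw [div_sub_div _ _ ht.ne' hs.ne']; ring
          linarith [hBA, heq]
        have h3 : (B - A)/(A*B) ≤ (B - A)/(1/(s*t)) :=
          div_le_div_of_nonneg_left (by linarith) (by positivity) hAB'
        have h4 : (B - A)/(1/(s*t)) = (B - A) * (s*t) := by field_simp
        have h5 : (B - A) * (s*t) ≤ ((s-t)/(s*t)) * (s*t) :=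
          mul_le_mul_of_nonneg_right h2 hst.le
        have h6 : ((s-t)/(s*t)) * (s*t) = s - t := by field_simp
        linarith [h1, h3, h4 ▸ h3, h5, h6]
      have hfs := hf s hs
      have hft := hf t ht
      rw [hfs, hft]
      have : L / A - L / B = L * (1/A - 1/B) := by ring
      rw [this]
      exact mul_le_mul_of_nonneg_left hdiff hL0.le
    -- use tendsto slope
    have htend : Filter.Tendsto (slope (fun s => α / c s) t) (nhdsWithin t (Set.Ioi t)) (nhds d) := by
      have := hasDerivAt_iff_tendsto_slope.mp hd
      exact this.mono_left (nhdsWithin_mono t (fun x hx => ne_of_gt hx))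
    refine le_of_tendsto htend ?_
    filter_upwards [self_mem_nhdsWithin] with s hs
    have hts : t < s := hs
    have hst : 0 < s - t := by linarith
    rw [slope_def_field, div_le_iff₀ hst]
    simpa using hkey s hts
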